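/- Let φ: A* → A* be a non-erasing morphism over a finite alphabet A satisfying alph(φ^n(a)) = alph(φ(a)) for every a ∈ A and every n ≥ 1. Let A' be a leaf of the tree of invariant subalphabets of φ. Then for every unbounded letter a ∈ A', one has alph(φ²(a)) = A'. -/

import Mathlib

/-- The extension of the morphism given by `φ` on letters to a morphism on words. -/
def extM {A B : Type*} (φ : A → List B) (w : List A) : List B := w.flatMap φ

/-- The `k`-th power `u^k` of a word `u`. -/
def wpow {A : Type*} (u : List A) (k : ℕ) : List A := (List.replicate k u).flatten

/-- A word `v` is primitive if `v = u^k` implies `k = 1`. -/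
def Primitive {A : Type*} (v : List A) : Prop :=
  v ≠ [] ∧ ∀ (u : List A) (k : ℕ), v = wpow u k → k = 1

/-- The language of the D0L-system `(A, φ, w)`: all factors of the words `φ^n(w)`. -/
def LangD0L {A : Type*} (φ : A → List A) (w : List A) : Set (List A) :=
  {v | ∃ n : ℕ, v <:+: (extM φ)^[n] w}

/-- `fact(Ψ(L))`: all factors of `Ψ`-images of elements of `L`. -/
def factImg {A B : Type*} (Ψ : A → List B) (L : Set (List A)) : Set (List B) :=
  {v | ∃ u ∈ L, v <:+: extM Ψ u}

/-- The language of the HD0L-system `(A, φ, w, Ψ)`. -/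
def LangHD0L {A B : Type*} (φ : A → List A) (w : List A) (Ψ : A → List B) : Set (List B) :=
  factImg Ψ (LangD0L φ w)

/-- A morphism is non-erasing if no letter is mapped to the empty word. -/
def NonErasing {A B : Type*} (φ : A → List B) : Prop := ∀ a, φ a ≠ []

/-- A letter `b` is bounded (w.r.t. `φ`) if the lengths `|φ^n(b)|` are bounded. -/
def BddLetter {A : Type*} (φ : A → List A) (b : A) : Prop :=
  ∃ C : ℕ, ∀ n : ℕ, ((extM φ)^[n] [b]).length ≤ C

/-- The set of letters occurring in a word. -/
def alph {A : Type*} (u : List A) : Set A := {a | a ∈ u}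

/-- `alph(φ(S))` for a set of letters `S`: letters occurring in `φ(b)` for some `b ∈ S`. -/
def alphIm {A : Type*} (φ : A → List A) (S : Set A) : Set A := ⋃ b ∈ S, alph (φ b)

/-- A D0L-system is pushy if its language contains infinitely many words over bounded letters. -/
def Pushy {A : Type*} (φ : A → List A) (w : List A) : Prop :=
  {v ∈ LangD0L φ w | ∀ a ∈ v, BddLetter φ a}.Infinite

/-- A factorial language `L` is uniformly recurrent: for every `n` there is `K` such that
every element of `L` of length `K` contains every element of `L` of length `n` as a factor. -/
def UnifRec {A : Type*} (L : Set (List A)) : Prop :=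
  ∀ n : ℕ, ∃ K : ℕ, ∀ u ∈ L, u.length = K → ∀ v ∈ L, v.length = n → v <:+: u

/-- Vertices of the tree of invariant subalphabets of `φ`: nonempty sets `S` with
`alph(φ(S)) = S` containing an unbounded letter `a` with `alph(φ(a)) = S`. -/
def IsVertex {A : Type*} (φ : A → List A) (S : Set A) : Prop :=
  S.Nonempty ∧ alphIm φ S = S ∧ ∃ a ∈ S, ¬ BddLetter φ a ∧ alph (φ a) = S

/-- Leaves of the tree of invariant subalphabets: minimal vertices w.r.t. inclusion. -/
def IsLeaf {A : Type*} (φ : A → List A) (S : Set A) : Prop :=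
  IsVertex φ S ∧ ∀ T, IsVertex φ T → T ⊆ S → T = S

/-- Two words are conjugate: `u = xy` and `v = yx`. -/
def Conj {A : Type*} (u v : List A) : Prop := ∃ x y : List A, u = x ++ y ∧ v = y ++ x

/-- The prefix of length `n` of an infinite word. -/
def prefW {A : Type*} (w : ℕ → A) (n : ℕ) : List A := (List.range n).map w

/-
By the invariance assumption, `alph(φ²(a)) = alph(φ(a)) ⊆ A'` and every `alph(φ(b))`
is an invariant subalphabet. Among the unbounded letters `b` with `alph(φ(b)) ⊆ A'`, pick one
with `alph(φ(b))` minimal. Some letter `c` of `φ(b)` is unbounded, and `alph(φ(c)) ⊆ alph(φ(b))`,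
so by minimality the two are equal; then `c ∈ alph(φ(c))`, which makes `alph(φ(c))` a vertex
below the leaf `A'`, hence equal to `A'`.
-/

section

variable {A : Type*} (φ : A → List A)

theorem iterate_extM_append (n : ℕ) (u v : List A) :
    (extM φ)^[n] (u ++ v) = (extM φ)^[n] u ++ (extM φ)^[n] v := by
  induction n generalizing u v with
  | zero => rfl
  | succ n ih => simp only [Function.iterate_succ_apply, extM, List.flatMap_append, ih]

theorem alph_iterate_two (b : A) :
    alph ((extM φ)^[2] [b]) = alphIm φ (alph (φ b)) := by
  ext c
  simp [extM, alph, alphIm]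

theorem exists_bound_length_iterate_extM {w : List A} (hw : ∀ c ∈ w, BddLetter φ c) :
    ∃ C, ∀ n, ((extM φ)^[n] w).length ≤ C := by
  induction w with
  | nil => exact ⟨0, fun n => by rw [Function.iterate_fixed rfl n, List.length_nil]⟩
  | cons c w ih =>
    obtain ⟨C₁, hC₁⟩ := hw c List.mem_cons_self
    obtain ⟨C₂, hC₂⟩ := ih fun d hd => hw d (List.mem_cons_of_mem c hd)
    refine ⟨C₁ + C₂, fun n => ?_⟩
    rw [← List.singleton_append, iterate_extM_append, List.length_append]
    exact Nat.add_le_add (hC₁ n) (hC₂ n)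

theorem exists_mem_not_bddLetter {b : A} (hb : ¬ BddLetter φ b) :
    ∃ c ∈ φ b, ¬ BddLetter φ c := by
  by_contra! h
  obtain ⟨C, hC⟩ := exists_bound_length_iterate_extM φ h
  refine hb ⟨max 1 C, fun n => ?_⟩
  cases n with
  | zero => simp
  | succ n =>
    rw [Function.iterate_succ_apply, extM, List.flatMap_singleton]
    exact (hC n).trans (le_max_right 1 C)

theorem alph_eq_of_isLeaf [Finite A] (hinv : ∀ c, alphIm φ (alph (φ c)) = alph (φ c))
    {A' : Set A} (hA' : IsLeaf φ A') {b : A} (hb : ¬ BddLetter φ b) (hsub : alph (φ b) ⊆ A') :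
    alph (φ b) = A' := by
  generalize hS : alph (φ b) = S at hsub
  induction S using WellFoundedLT.induction generalizing b with
  | ind S ih =>
    obtain ⟨c, hc, hcu⟩ := exists_mem_not_bddLetter φ hb
    have hcS : alph (φ c) ⊆ S := by
      rw [← hS, ← hinv b]
      exact Set.subset_biUnion_of_mem (u := fun x => alph (φ x)) hc
    rcases hcS.eq_or_ssubset with heq | hlt
    · have hcc : c ∈ alph (φ c) := heq ▸ hS ▸ hc
      exact hA'.2 S (heq ▸ ⟨⟨c, hcc⟩, hinv c, c, hcc, hcu, rfl⟩) hsub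
    · exact hsub.antisymm (ih _ hlt hcu rfl (hcS.trans hsub) ▸ hcS)

end

theorem stmt8_general {A : Type*} [Fintype A] (φ : A → List A)
    (hstar : ∀ (a : A) (n : ℕ), 1 ≤ n → alph ((extM φ)^[n] [a]) = alph (φ a))
    (A' : Set A) (hA' : IsLeaf φ A')
    (a : A) (ha : a ∈ A') (hau : ¬ BddLetter φ a) :
    alph ((extM φ)^[2] [a]) = A' := by
  have hinv : ∀ c, alphIm φ (alph (φ c)) = alph (φ c) := fun c => by
    rw [← alph_iterate_two]
    exact hstar c 2 (by norm_num)
  have hsub : alph (φ a) ⊆ A' :=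
    hA'.1.2.1 ▸ Set.subset_biUnion_of_mem (u := fun x => alph (φ x)) ha
  rw [hstar a 2 (by norm_num)]
  exact alph_eq_of_isLeaf φ hinv hA' hau hsub

/-- Under Assumption ∗, if `A'` is a leaf of the tree of invariant
subalphabets, then `alph(φ²(a)) = A'` for every unbounded `a ∈ A'`. -/
theorem stmt8 {A : Type*} [Fintype A] (φ : A → List A) (hφ : NonErasing φ)
    (hstar : ∀ (a : A) (n : ℕ), 1 ≤ n → alph ((extM φ)^[n] [a]) = alph (φ a))
    (A' : Set A) (hA' : IsLeaf φ A')
    (a : A) (ha : a ∈ A') (hau : ¬ BddLetter φ a) :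
    alph ((extM φ)^[2] [a]) = A' :=
  stmt8_general φ hstar A' hA' a ha hau
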